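/- arXiv:1604.08929 — 3 statements merged into one kernel-verified Lean document; each statement's English description precedes it below -/
import Mathlib

section
/- The map sending an Arf sequence (x_1, …, x_n) to the set S(x_1, …, x_n) is a bijection from the set of all Arf sequences onto the set of all numerical semigroups with the Arf property that are different from ℕ. -/
/-- A numerical semigroup: a subset of ℕ containing 0, closed under addition,
with finite complement. -/
def IsNumericalSemigroup (S : Set ℕ) : Prop :=
  0 ∈ S ∧ (∀ a ∈ S, ∀ b ∈ S, a + b ∈ S) ∧ Sᶜ.Finite

/-- The Arf property: for all x ≥ y ≥ z in S, x + y - z ∈ S. -/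
def HasArfProperty (S : Set ℕ) : Prop :=
  ∀ x ∈ S, ∀ y ∈ S, ∀ z ∈ S, z ≤ y → y ≤ x → x + y - z ∈ S

/-- The conductor: the least c such that every n ≥ c lies in S. -/
noncomputable def conductorOf (S : Set ℕ) : ℕ := sInf {c | ∀ n, c ≤ n → n ∈ S}

/-- The Frobenius number: the largest natural number not in S. -/
noncomputable def frobeniusOf (S : Set ℕ) : ℕ := sSup {n | n ∉ S}

/-- The genus: the number of gaps of S. -/
noncomputable def genusOf (S : Set ℕ) : ℕ := Sᶜ.ncard

/-- The multiplicity: the least positive element of S. -/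
noncomputable def multiplicityOf (S : Set ℕ) : ℕ := sInf {n | n ∈ S ∧ 0 < n}

/-- w(i) = min { s ∈ S : s ≡ i (mod m) }. -/
noncomputable def aperyW (S : Set ℕ) (m i : ℕ) : ℕ := sInf {s | s ∈ S ∧ s % m = i}

/-- The cocycle h(i,j) = (w(i) + w(j) - w((i+j) mod m)) / m, as a rational number. -/
noncomputable def cocycle (S : Set ℕ) (m i j : ℕ) : ℚ :=
  ((aperyW S m i : ℚ) + (aperyW S m j : ℚ) - (aperyW S m ((i + j) % m) : ℚ)) / (m : ℚ)

/-- An Arf sequence (x₁, …, xₙ), 0-indexed: xₙ ≥ ⋯ ≥ x₁ ≥ 2, and each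
x_{i+1} is either a sum x_i + ⋯ + x_j for some j ≤ i, or at least x_i + ⋯ + x₁. -/
def ArfSeq (n : ℕ) (x : Fin n → ℕ) : Prop :=
  1 ≤ n ∧ Monotone x ∧ (∀ i, 2 ≤ x i) ∧
  ∀ i : Fin n, ∀ h : i.1 + 1 < n,
    (∃ j : Fin n, j ≤ i ∧ x ⟨i.1 + 1, h⟩ = ∑ k ∈ Finset.Icc j i, x k) ∨
    (∑ k ∈ Finset.Iic i, x k) ≤ x ⟨i.1 + 1, h⟩

/-- The set S(x₁,…,xₙ) = {0} ∪ {xₙ + ⋯ + x_k : 1 ≤ k ≤ n} ∪ {z : z ≥ x₁ + ⋯ + xₙ}. -/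
def arfSet (n : ℕ) (x : Fin n → ℕ) : Set ℕ :=
  {z | z = 0 ∨ (∃ k : Fin n, z = ∑ i ∈ Finset.Ici k, x i) ∨ (∑ i, x i) ≤ z}

/-- The numerical-semigroup-like set generated by A ⊆ ℕ. -/
def genNS (A : Set ℕ) : Set ℕ := (AddSubmonoid.closure A : Set ℕ)

/-!
An Arf sequence is the multiplicity sequence of its set. With `S()` = ℕ for the empty sequence,
`S(x₁, …, xₙ) = {0} ∪ (xₙ + S(x₁, …, xₙ₋₁))`, and the condition on `xₙ` in the definition of an
Arf sequence says exactly that `xₙ ≥ 2` and `xₙ ∈ S(x₁, …, xₙ₋₁)`; as `xₙ` is then the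
multiplicity of `S(x₁, …, xₙ)`, the set determines the sequence. Conversely, an Arf numerical
semigroup `S ≠ ℕ` of multiplicity `m` is `{0} ∪ (m + T)` for `T = {t | m + t ∈ S}`, which is again
an Arf numerical semigroup, contains `m`, and has fewer gaps, so induction produces the sequence.
-/

section Semigroups

variable {S T : Set ℕ} {a m : ℕ}

theorem HasArfProperty.add_mem (hS : HasArfProperty S) (h0 : 0 ∈ S) {x y : ℕ} (hx : x ∈ S)
    (hy : y ∈ S) : x + y ∈ S := by
  rcases le_total y x with h | h
  · simpa using hS x hx y hy 0 h0 (Nat.zero_le y) h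
  · simpa [add_comm] using hS y hy x hx 0 h0 (Nat.zero_le x) h

theorem hasArfProperty_univ : HasArfProperty Set.univ := fun _ _ _ _ _ _ _ _ => trivial

theorem isNumericalSemigroup_univ : IsNumericalSemigroup Set.univ := by
  simp [IsNumericalSemigroup]

theorem add_mem_insert_zero_image_add (hT : ∀ s ∈ T, ∀ t ∈ T, s + t ∈ T) (ha : a ∈ T) {x y : ℕ}
    (hx : x ∈ insert 0 ((a + ·) '' T)) (hy : y ∈ insert 0 ((a + ·) '' T)) :
    x + y ∈ insert 0 ((a + ·) '' T) := by
  rcases hx with rfl | ⟨s, hs, rfl⟩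
  · rwa [zero_add]
  rcases hy with rfl | ⟨t, ht, rfl⟩
  · exact Or.inr ⟨s, hs, rfl⟩
  exact Or.inr ⟨a + s + t, hT _ (hT a ha s hs) t ht, by ring⟩

theorem hasArfProperty_insert_zero_image_add (hT : HasArfProperty T) (h0 : 0 ∈ T) (ha : a ∈ T) :
    HasArfProperty (insert 0 ((a + ·) '' T)) := by
  rintro x hx y hy z (rfl | ⟨u, hu, rfl⟩) hzy hyx
  · simpa using add_mem_insert_zero_image_add (fun _ hs _ ht => hT.add_mem h0 hs ht) ha hx hy
  rcases hy with rfl | ⟨t, ht, rfl⟩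
  · simpa [show a + u = 0 by simpa using hzy] using hx
  rcases hx with rfl | ⟨s, hs, rfl⟩
  · exact Or.inl (by dsimp only at hyx ⊢; omega)
  simp only [add_le_add_iff_left] at hzy hyx
  exact Or.inr ⟨s + t - u, hT s hs t ht u hu hzy hyx, by dsimp only; omega⟩

theorem isNumericalSemigroup_insert_zero_image_add (hT : IsNumericalSemigroup T) (ha : a ∈ T) :
    IsNumericalSemigroup (insert 0 ((a + ·) '' T)) := by
  refine ⟨Set.mem_insert 0 _, fun x hx y hy => add_mem_insert_zero_image_add hT.2.1 ha hx hy, ?_⟩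
  refine ((Set.finite_Iio a).union (hT.2.2.image (a + ·))).subset fun z hz => ?_
  by_cases hza : z < a
  · exact Or.inl hza
  · exact Or.inr ⟨z - a, fun h => hz (Or.inr ⟨z - a, h, Nat.add_sub_cancel' (by omega)⟩),
      Nat.add_sub_cancel' (by omega)⟩

theorem one_notMem_insert_zero_image_add (ha : 2 ≤ a) : 1 ∉ insert 0 ((a + ·) '' T) := by
  rintro (h | ⟨t, -, h⟩)
  · exact one_ne_zero h
  · simp only at h; omega

theorem eq_and_eq_of_insert_zero_image_add_eq {b : ℕ} {T' : Set ℕ} (ha : 0 < a) (hb : 0 < b)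
    (hT : 0 ∈ T) (hT' : 0 ∈ T')
    (h : insert 0 ((a + ·) '' T) = insert 0 ((b + ·) '' T')) : a = b ∧ T = T' := by
  have hle : ∀ {a b : ℕ} {T T' : Set ℕ}, 0 < a → 0 ∈ T →
      insert 0 ((a + ·) '' T) = insert 0 ((b + ·) '' T') → b ≤ a := by
    intro a b T T' ha hT h
    obtain h | ⟨t, -, h⟩ : a ∈ insert 0 ((b + ·) '' T') := h ▸ Or.inr ⟨0, hT, rfl⟩
    · omega
    · exact h ▸ Nat.le_add_right b t
  obtain rfl : a = b := le_antisymm (hle hb hT' h.symm) (hle ha hT h)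
  refine ⟨rfl, Set.ext fun t => ?_⟩
  have := Set.ext_iff.1 h (a + t)
  simp only [Set.mem_insert_iff, Set.mem_image, add_right_inj, exists_eq_right] at this
  simpa [ha.ne'] using this

theorem IsNumericalSemigroup.one_notMem (hS : IsNumericalSemigroup S) (hne : S ≠ Set.univ) :
    1 ∉ S := by
  intro h1
  refine hne (Set.eq_univ_of_forall fun z => ?_)
  induction z with
  | zero => exact hS.1
  | succ z ih => exact hS.2.1 z ih 1 h1

theorem IsNumericalSemigroup.multiplicityOf_mem (hS : IsNumericalSemigroup S) :
    multiplicityOf S ∈ S ∧ 0 < multiplicityOf S := by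
  obtain ⟨s, hs, hs0⟩ := hS.2.2.infinite_compl.exists_gt 0
  exact Nat.sInf_mem (s := {n | n ∈ S ∧ 0 < n}) ⟨s, compl_compl S ▸ hs, hs0⟩

theorem multiplicityOf_le {s : ℕ} (hs : s ∈ S) (hs0 : 0 < s) : multiplicityOf S ≤ s :=
  Nat.sInf_le ⟨hs, hs0⟩

theorem hasArfProperty_preimage_add (hS : HasArfProperty S) :
    HasArfProperty ((m + ·) ⁻¹' S) := by
  intro x hx y hy z hz hzy hyx
  simp only [Set.mem_preimage] at hx hy hz ⊢
  rw [show m + (x + y - z) = (m + x) + (m + y) - (m + z) by omega]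
  exact hS _ hx _ hy _ hz (by omega) (by omega)

theorem self_mem_preimage_add (hS : IsNumericalSemigroup S) (hm : m ∈ S) : m ∈ (m + ·) ⁻¹' S :=
  hS.2.1 m hm m hm

theorem isNumericalSemigroup_preimage_add (hS : IsNumericalSemigroup S) (hArf : HasArfProperty S)
    (hm : m ∈ S) : IsNumericalSemigroup ((m + ·) ⁻¹' S) := by
  have h0 : 0 ∈ (m + ·) ⁻¹' S := by simpa using hm
  refine ⟨h0, fun x hx y hy => (hasArfProperty_preimage_add hArf).add_mem h0 hx hy, ?_⟩
  exact hS.2.2.preimage (add_right_injective m).injOn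

theorem compl_preimage_add_subset_Iio {B : ℕ} (hB : Sᶜ ⊆ Set.Iio (B + 1)) (hm : 0 < m) :
    ((m + ·) ⁻¹' S)ᶜ ⊆ Set.Iio B := fun t ht => by
  have := hB ht
  simp only [Set.mem_Iio] at this ⊢
  omega

theorem eq_insert_zero_image_add_preimage_add (h0 : 0 ∈ S) (hm : ∀ s ∈ S, 0 < s → m ≤ s) :
    S = insert 0 ((m + ·) '' ((m + ·) ⁻¹' S)) := by
  ext s
  refine ⟨fun hs => ?_, ?_⟩
  · rcases Nat.eq_zero_or_pos s with rfl | hs0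
    · exact Set.mem_insert 0 _
    · exact Or.inr ⟨s - m, by simpa [Nat.add_sub_cancel' (hm s hs hs0)] using hs,
        Nat.add_sub_cancel' (hm s hs hs0)⟩
  · rintro (rfl | ⟨t, ht, rfl⟩)
    exacts [h0, ht]

end Semigroups

section ArfSequences

open Finset

variable {n : ℕ}

theorem Fin.sum_Ici_castSucc {M : Type*} [AddCommMonoid M] (x : Fin (n + 1) → M) (k : Fin n) :
    ∑ i ∈ Ici k.castSucc, x i = ∑ i ∈ Ici k, x i.castSucc + x (Fin.last n) := by
  rw [Ici_eq_Icc, Fin.top_eq_last, Icc_eq_cons_Ico (Fin.castSucc_lt_last k).le, Finset.sum_cons,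
    ← Fin.map_castSuccEmb_Ici, Finset.sum_map, add_comm]
  rfl

theorem arfSet_zero (x : Fin 0 → ℕ) : arfSet 0 x = Set.univ :=
  Set.eq_univ_of_forall fun _ => Or.inr (Or.inr (by simp))

theorem arfSet_succ (x : Fin (n + 1) → ℕ) :
    arfSet (n + 1) x = insert 0 ((x (Fin.last n) + ·) '' arfSet n (Fin.init x)) := by
  ext z
  simp only [arfSet, Set.mem_ofPred_eq, Set.mem_insert_iff, Set.mem_image, Fin.exists_fin_succ',
    Fin.init, Fin.sum_Ici_castSucc, Fin.sum_univ_castSucc, ← Fin.top_eq_last, Ici_top]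
  constructor
  · rintro (rfl | (⟨k, rfl⟩ | rfl) | h)
    · exact .inl rfl
    · exact .inr ⟨_, .inr (.inl ⟨k, rfl⟩), add_comm _ _⟩
    · exact .inr ⟨0, .inl rfl, add_zero _⟩
    · exact .inr ⟨z - x ⊤, .inr (.inr (by omega)), by omega⟩
  · rintro (rfl | ⟨t, rfl | ⟨k, rfl⟩ | h, rfl⟩)
    · exact .inl rfl
    · exact .inr (.inl (.inr (add_zero _)))
    · exact .inr (.inl (.inl ⟨k, add_comm _ _⟩))
    · exact .inr (.inr (by omega))

theorem Fin.sum_castLE_Icc {M : Type*} [AddCommMonoid M] (x : Fin n → M) (i : Fin n)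
    (j : Fin (i + 1)) : ∑ k ∈ Icc j (Fin.last i), x (Fin.castLE i.2 k) =
      ∑ k ∈ Icc (Fin.castLE i.2 j) i, x k := by
  change _ = ∑ k ∈ Icc (Fin.castLE i.2 j) (Fin.castLE i.2 (Fin.last i)), x k
  rw [← Fin.map_castLEEmb_Icc, Finset.sum_map]
  rfl

theorem mem_arfSet_castLE_iff (x : Fin n → ℕ) (i : Fin n) {z : ℕ} (hz : z ≠ 0) :
    z ∈ arfSet (i + 1) (fun k => x (Fin.castLE i.2 k)) ↔
      (∃ j, j ≤ i ∧ z = ∑ k ∈ Icc j i, x k) ∨ ∑ k ∈ Iic i, x k ≤ z := by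
  have hIic : ∑ k ∈ Iic i, x k = ∑ k, x (Fin.castLE i.2 k) := by
    change ∑ k ∈ Iic (Fin.castLE i.2 (Fin.last i)), x k = _
    rw [← Fin.map_castLEEmb_Iic, Finset.sum_map, ← Fin.top_eq_last, Iic_top]
    rfl
  simp only [arfSet, Set.mem_ofPred_eq, hz, false_or, Ici_eq_Icc, Fin.top_eq_last,
    Fin.sum_castLE_Icc, hIic]
  constructor
  · rintro (⟨j, rfl⟩ | h)
    · exact .inl ⟨_, Fin.le_iff_val_le_val.2 (Nat.lt_succ_iff.1 j.2), rfl⟩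
    · exact .inr h
  · rintro (⟨j, hj, rfl⟩ | h)
    · exact .inl ⟨⟨j, Nat.lt_succ_iff.2 hj⟩, rfl⟩
    · exact .inr h

theorem le_of_mem_arfSet {y : Fin (n + 1) → ℕ} {z : ℕ} (hz : z ∈ arfSet (n + 1) y) (hz0 : z ≠ 0) :
    y (Fin.last n) ≤ z := by
  rcases hz with h | ⟨j, rfl⟩ | h
  · exact absurd h hz0
  · exact single_le_sum (fun _ _ => Nat.zero_le _) (mem_Ici.2 (Fin.le_last j))
  · exact (single_le_sum (fun _ _ => Nat.zero_le _) (mem_univ _)).trans h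

theorem arfSeq_iff_forall_mem_arfSet (x : Fin n → ℕ) :
    ArfSeq n x ↔ 1 ≤ n ∧ ∀ k (hk : k < n),
      2 ≤ x ⟨k, hk⟩ ∧ x ⟨k, hk⟩ ∈ arfSet k (fun j => x (Fin.castLE hk.le j)) := by
  constructor
  · rintro ⟨hn, -, h2, hstep⟩
    refine ⟨hn, fun k hk => ⟨h2 _, ?_⟩⟩
    cases k with
    | zero => exact arfSet_zero _ ▸ Set.mem_univ _
    | succ i =>
      exact (mem_arfSet_castLE_iff x ⟨i, by omega⟩ (by have := h2 ⟨i + 1, hk⟩; omega)).2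
        (hstep ⟨i, by omega⟩ hk)
  · rintro ⟨hn, h⟩
    obtain ⟨m, rfl⟩ : ∃ m, n = m + 1 := ⟨n - 1, by omega⟩
    have hne : ∀ k (hk : k < m + 1), x ⟨k, hk⟩ ≠ 0 := fun k hk => by have := (h k hk).1; omega
    refine ⟨hn, Fin.monotone_iff_le_succ.2 fun i => ?_, fun i => (h i i.2).1, fun i hi => ?_⟩
    · exact le_of_mem_arfSet (h (i + 1) (by omega)).2 (hne _ _)
    · exact (mem_arfSet_castLE_iff x i (hne _ hi)).1 (h (i + 1) hi).2

theorem arfSeq_succ_iff (x : Fin (n + 1) → ℕ) :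
    ArfSeq (n + 1) x ↔ (n = 0 ∨ ArfSeq n (Fin.init x)) ∧
      2 ≤ x (Fin.last n) ∧ x (Fin.last n) ∈ arfSet n (Fin.init x) := by
  rw [arfSeq_iff_forall_mem_arfSet, arfSeq_iff_forall_mem_arfSet]
  constructor
  · rintro ⟨-, h⟩
    refine ⟨?_, h n n.lt_succ_self⟩
    rcases Nat.eq_zero_or_pos n with hn | hn
    · exact .inl hn
    · exact .inr ⟨hn, fun k hk => h k (by omega)⟩
  · rintro ⟨hinit, hlast⟩
    refine ⟨n.succ_pos, fun k hk => ?_⟩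
    rcases Nat.lt_succ_iff_lt_or_eq.1 hk with hk | rfl
    · rcases hinit with rfl | ⟨-, h⟩
      · exact absurd hk (Nat.not_lt_zero k)
      · exact h k hk
    · exact hlast

end ArfSequences

theorem isNumericalSemigroup_arfSet :
    ∀ {n : ℕ} {x : Fin n → ℕ}, (n = 0 ∨ ArfSeq n x) → IsNumericalSemigroup (arfSet n x)
  | 0, x, _ => arfSet_zero x ▸ isNumericalSemigroup_univ
  | n + 1, x, h => by
    obtain ⟨hinit, -, hmem⟩ := (arfSeq_succ_iff x).1 (h.resolve_left n.succ_ne_zero)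
    rw [arfSet_succ]
    exact isNumericalSemigroup_insert_zero_image_add (isNumericalSemigroup_arfSet hinit) hmem

theorem hasArfProperty_arfSet :
    ∀ {n : ℕ} {x : Fin n → ℕ}, (n = 0 ∨ ArfSeq n x) → HasArfProperty (arfSet n x)
  | 0, x, _ => arfSet_zero x ▸ hasArfProperty_univ
  | n + 1, x, h => by
    obtain ⟨hinit, -, hmem⟩ := (arfSeq_succ_iff x).1 (h.resolve_left n.succ_ne_zero)
    rw [arfSet_succ]
    exact hasArfProperty_insert_zero_image_add (hasArfProperty_arfSet hinit) (.inl rfl) hmem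

theorem one_notMem_arfSet : ∀ {n : ℕ} {x : Fin n → ℕ}, ArfSeq n x → 1 ∉ arfSet n x
  | 0, _, h => absurd h.1 (by omega)
  | n + 1, x, h => by
    rw [arfSet_succ]
    exact one_notMem_insert_zero_image_add ((arfSeq_succ_iff x).1 h).2.1

theorem sigma_eq_of_arfSet_eq :
    ∀ {n m : ℕ} {x : Fin n → ℕ} {y : Fin m → ℕ}, (n = 0 ∨ ArfSeq n x) → (m = 0 ∨ ArfSeq m y) →
      arfSet n x = arfSet m y → (⟨n, x⟩ : Σ k, Fin k → ℕ) = ⟨m, y⟩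
  | 0, 0, x, y, _, _, _ => by rw [Subsingleton.elim x y]
  | 0, m + 1, x, y, _, hy, h =>
    absurd (h ▸ arfSet_zero x ▸ Set.mem_univ 1) (one_notMem_arfSet (hy.resolve_left m.succ_ne_zero))
  | n + 1, 0, x, y, hx, _, h =>
    absurd (h ▸ arfSet_zero y ▸ Set.mem_univ 1) (one_notMem_arfSet (hx.resolve_left n.succ_ne_zero))
  | n + 1, m + 1, x, y, hx, hy, h => by
    obtain ⟨hx', hx2, -⟩ := (arfSeq_succ_iff x).1 (hx.resolve_left n.succ_ne_zero)
    obtain ⟨hy', hy2, -⟩ := (arfSeq_succ_iff y).1 (hy.resolve_left m.succ_ne_zero)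
    rw [arfSet_succ, arfSet_succ] at h
    obtain ⟨hlast, hinit⟩ :=
      eq_and_eq_of_insert_zero_image_add_eq (by omega) (by omega) (.inl rfl) (.inl rfl) h
    obtain ⟨rfl, hinit⟩ := Sigma.mk.inj_iff.1 (sigma_eq_of_arfSet_eq hx' hy' hinit)
    rw [← Fin.snoc_init_self x, ← Fin.snoc_init_self y, eq_of_heq hinit, hlast]

theorem exists_arfSet_eq {S : Set ℕ} (hS : IsNumericalSemigroup S) (hArf : HasArfProperty S) :
    ∃ n, ∃ x : Fin n → ℕ, (n = 0 ∨ ArfSeq n x) ∧ arfSet n x = S := by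
  obtain ⟨B, hB⟩ : ∃ B, Sᶜ ⊆ Set.Iio B :=
    let ⟨B, hB⟩ := hS.2.2.bddAbove; ⟨B + 1, fun z hz => Nat.lt_succ_of_le (hB hz)⟩
  induction B generalizing S with
  | zero =>
    refine ⟨0, Fin.elim0, .inl rfl, ?_⟩
    rw [arfSet_zero, eq_comm, ← Set.compl_empty_iff]
    exact Set.subset_empty_iff.1 (by simpa using hB)
  | succ B ih =>
    by_cases hne : S = Set.univ
    · exact ⟨0, Fin.elim0, .inl rfl, hne ▸ arfSet_zero _⟩
    obtain ⟨hmS, hm0⟩ := hS.multiplicityOf_mem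
    have hm2 : 2 ≤ multiplicityOf S :=
      Nat.lt_of_le_of_ne hm0 fun h : 1 = multiplicityOf S => hS.one_notMem hne (h ▸ hmS)
    obtain ⟨n, y, hy, hyT⟩ := ih (isNumericalSemigroup_preimage_add hS hArf hmS)
      (hasArfProperty_preimage_add hArf) (compl_preimage_add_subset_Iio hB hm0)
    refine ⟨n + 1, Fin.snoc y (multiplicityOf S), .inr ((arfSeq_succ_iff _).2 ?_), ?_⟩
    · rw [Fin.init_snoc, Fin.snoc_last, hyT]
      exact ⟨hy, hm2, self_mem_preimage_add hS hmS⟩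
    · rw [arfSet_succ, Fin.init_snoc, Fin.snoc_last, hyT]
      exact (eq_insert_zero_image_add_preimage_add hS.1 fun s hs hs0 =>
        multiplicityOf_le hs hs0).symm

theorem arfSeq_bijOn_arfSemigroups :
    Set.BijOn (fun p : Σ n : ℕ, Fin n → ℕ => arfSet p.1 p.2)
      {p : Σ n : ℕ, Fin n → ℕ | ArfSeq p.1 p.2}
      {S : Set ℕ | IsNumericalSemigroup S ∧ HasArfProperty S ∧ S ≠ Set.univ} := by
  refine ⟨fun p hp => ⟨isNumericalSemigroup_arfSet (.inr hp), hasArfProperty_arfSet (.inr hp),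
      fun h => one_notMem_arfSet hp (Set.eq_univ_iff_forall.1 h 1)⟩,
    fun p hp q hq h => sigma_eq_of_arfSet_eq (.inr hp) (.inr hq) h, ?_⟩
  rintro S ⟨hS, hArf, hne⟩
  obtain ⟨n, x, rfl | hx, rfl⟩ := exists_arfSet_eq hS hArf
  · exact absurd (arfSet_zero x) hne
  · exact ⟨⟨n, x⟩, hx, rfl⟩
end

section
/- Let S be a numerical semigroup with multiplicity m and Kunz coordinates (x_1, …, x_{m−1}) (with the convention x_0 = 0). Then S has the Arf property if and only if for all i, j ∈ {0, …, m−1} the following holds: (i) if x_i + ⌈(i − j)/m⌉ ≥ x_j, then x_i − x_{(2j−i) mod m} + 2⌈(i − j)/m⌉ + ⌊2j/m⌋ − ⌊(((2j − i) mod m) + i)/m⌋ ≥ 0; (ii) if x_i + ⌈(i − j)/m⌉ < x_j, then x_j − x_{(2j−i) mod m} + ⌈(i − j)/m⌉ + ⌊2j/m⌋ − ⌊(((2j − i) mod m) + i)/m⌋ ≥ 0. Here ⌈·⌉ and ⌊·⌋ denote the ceiling and floor of rational numbers. -/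
/-! By Kunz, if `m ∈ S` and `x` are the Kunz coordinates, then `u * m + i ∈ S ↔ x i ≤ u` for
`i < m`. The Arf property is equivalent to `2 * s - t ∈ S` for `t ≤ s` in `S`: from a triple
`z ≤ t ≤ s` pass to `(s, 2t - z, t)`, which has the same `s + t - z` and smaller `s + t - 2z`.
Writing `t = u m + i` and `s = v m + j`, one has `t ≤ s ↔ u + c ≤ v` with `c = ⌈(i - j)/m⌉`, and
`2s - t = (2v - u + q) m + r` with `r = (2j - i) mod m` and `q = ⌊2j/m⌋ - ⌊(r + i)/m⌋`. So the
condition reads `x r ≤ 2v - u + q` for all `u ≥ x i`, `v ≥ x j`, `u + c ≤ v`; the least value of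
`2v - u` is attained at `v = max (x j) (x i + c)`, `u = v - c`, and the two branches of the max
are the two cases of the theorem. -/

theorem add_sub_mem_of_two_mul_sub_mem {S : Set ℕ}
    (H : ∀ s ∈ S, ∀ t ∈ S, t ≤ s → 2 * s - t ∈ S) {s t z : ℕ}
    (hs : s ∈ S) (ht : t ∈ S) (hz : z ∈ S) (hzt : z ≤ t) (hts : t ≤ s) : s + t - z ∈ S := by
  rcases hzt.eq_or_lt with rfl | hzt
  · simpa using hs
  have h2t := H t ht z hz hzt.le
  rcases le_total (2 * t - z) s with h | h
  · have := add_sub_mem_of_two_mul_sub_mem H hs h2t ht (by omega) h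
    rwa [show s + (2 * t - z) - t = s + t - z by omega] at this
  · have := add_sub_mem_of_two_mul_sub_mem H h2t hs ht hts h
    rwa [show 2 * t - z + s - t = s + t - z by omega] at this
termination_by s + t - 2 * z
decreasing_by all_goals omega

theorem hasArfProperty_iff_two_mul_sub_mem (S : Set ℕ) :
    HasArfProperty S ↔ ∀ s ∈ S, ∀ t ∈ S, t ≤ s → 2 * s - t ∈ S := by
  refine ⟨fun h s hs t ht hts => ?_, fun H s hs t ht z hz hzt hts =>
    add_sub_mem_of_two_mul_sub_mem H hs ht hz hzt hts⟩
  simpa [two_mul] using h s hs s hs t ht hts le_rfl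

theorem mul_add_le_mul_add_iff_add_ceil_le {m : ℕ} (hm : 0 < m) (i j : ℕ) (u v : ℤ) :
    u * m + i ≤ v * m + j ↔ u + ⌈((i : ℚ) - j) / m⌉ ≤ v := by
  conv_rhs => rw [← le_sub_iff_add_le', Int.ceil_le, div_le_iff₀ (by positivity : (0 : ℚ) < m)]
  constructor <;> intro h
  · have : ((u * m + i : ℤ) : ℚ) ≤ ((v * m + j : ℤ) : ℚ) := by exact_mod_cast h
    push_cast at this ⊢
    linarith
  · have : ((u * m + i : ℤ) : ℚ) ≤ ((v * m + j : ℤ) : ℚ) := by push_cast at h ⊢; linarith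
    exact_mod_cast this

theorem two_mul_sub_eq_floor_sub_floor (m i j : ℕ) {r : ℕ}
    (hr : (r : ℤ) = (2 * (j : ℤ) - i) % m) :
    2 * (j : ℤ) - i = (⌊(2 * (j : ℚ)) / m⌋ - ⌊((r : ℚ) + i) / m⌋) * m + r := by
  have h2j : ⌊(2 * (j : ℚ)) / m⌋ = 2 * (j : ℤ) / m := by
    simpa using Rat.floor_intCast_div_natCast (2 * j) m
  have hri : ⌊((r : ℚ) + i) / m⌋ = ((r : ℤ) + i) / m := by
    simpa using Rat.floor_intCast_div_natCast (r + i) m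
  have hmod : ((r : ℤ) + i) % m = 2 * (j : ℤ) % m := by
    rw [hr, Int.emod_add_emod, sub_add_cancel]
  rw [h2j, hri]
  linarith [Int.mul_ediv_add_emod (2 * (j : ℤ)) m, Int.mul_ediv_add_emod ((r : ℤ) + i) m]

theorem forall_le_two_mul_sub_add_iff {α : Type*} [CommRing α] [LinearOrder α]
    [IsStrictOrderedRing α] (p q c d y : α) :
    (∀ u v : α, p ≤ u → q ≤ v → u + c ≤ v → y ≤ 2 * v - u + d) ↔
      y ≤ max q (p + c) + c + d := by
  constructor
  · intro h
    have := h (max q (p + c) - c) (max q (p + c)) (by linarith [le_max_right q (p + c)])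
      (le_max_left _ _) (by linarith)
    linarith
  · intro h u v hu hv huv
    have : max q (p + c) ≤ v := max_le hv (by linarith)
    linarith

theorem nonneg_by_cases_iff_le_max_add {α : Type*} [CommRing α] [LinearOrder α]
    [IsStrictOrderedRing α] (a b c d₁ d₂ y : α) :
    ((b ≤ a + c → 0 ≤ a - y + 2 * c + d₁ - d₂) ∧ (a + c < b → 0 ≤ b - y + c + d₁ - d₂)) ↔
      y ≤ max b (a + c) + c + (d₁ - d₂) := by
  rcases le_or_gt b (a + c) with h | h
  · rw [max_eq_right h]
    constructor
    · rintro ⟨h₁, -⟩; linarith [h₁ h]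
    · intro hy; exact ⟨fun _ => by linarith, fun h' => absurd h' h.not_gt⟩
  · rw [max_eq_left h.le]
    constructor
    · rintro ⟨-, h₂⟩; linarith [h₂ h]
    · intro hy; exact ⟨fun h' => absurd h' h.not_ge, fun _ => by linarith⟩

namespace IsNumericalSemigroup

variable {S : Set ℕ}

theorem exists_pos_mem (hS : IsNumericalSemigroup S) : ∃ n ∈ S, 0 < n :=
  hS.2.2.infinite_compl.exists_gt 0 |>.imp fun _ h => by simpa using h

theorem multiplicityOf_mem_s7 (hS : IsNumericalSemigroup S) : multiplicityOf S ∈ S :=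
  (Nat.sInf_mem hS.exists_pos_mem).1

theorem multiplicityOf_pos (hS : IsNumericalSemigroup S) : 0 < multiplicityOf S :=
  (Nat.sInf_mem hS.exists_pos_mem).2

theorem add_mul_mem (hS : IsNumericalSemigroup S) {m n : ℕ} (hmS : m ∈ S) (hn : n ∈ S) (c : ℕ) :
    n + c * m ∈ S := by
  induction c with
  | zero => simpa using hn
  | succ c ih => simpa [add_mul, ← add_assoc] using hS.2.1 _ ih _ hmS

theorem aperyW_spec (hS : IsNumericalSemigroup S) {m i : ℕ} (hm : 0 < m) (hi : i < m) :
    aperyW S m i ∈ S ∧ aperyW S m i % m = i := by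
  obtain ⟨B, hB⟩ := hS.2.2.bddAbove
  refine Nat.sInf_mem (s := {s | s ∈ S ∧ s % m = i})
    ⟨i + (B + 1) * m, ?_, by simp [Nat.mod_eq_of_lt hi]⟩
  by_contra h
  have := hB h
  nlinarith

theorem mem_iff_aperyW_le (hS : IsNumericalSemigroup S) {m : ℕ} (hmS : m ∈ S) (hm : 0 < m)
    (n : ℕ) :
    n ∈ S ↔ aperyW S m (n % m) ≤ n := by
  refine ⟨fun hn => Nat.sInf_le ⟨hn, rfl⟩, fun hle => ?_⟩
  obtain ⟨hwS, hwm⟩ := hS.aperyW_spec hm (Nat.mod_lt n hm)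
  obtain ⟨c, hc⟩ := (Nat.modEq_iff_dvd' hle).mp hwm
  rw [show n = aperyW S m (n % m) + c * m by rw [mul_comm]; omega]
  exact hS.add_mul_mem hmS hwS c

theorem mem_iff_kunz (hS : IsNumericalSemigroup S) {m : ℕ} (hmS : m ∈ S) (hm : 0 < m)
    {x : ℕ → ℕ} (hx : ∀ i < m, aperyW S m i = x i * m + i) {n r : ℕ} {z : ℤ} (hr : r < m)
    (hn : (n : ℤ) = z * m + r) : n ∈ S ↔ (x r : ℤ) ≤ z := by
  have hnr : n % m = r := by
    zify
    rw [hn, add_comm, Int.add_mul_emod_self_right,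
      Int.emod_eq_of_lt (by positivity) (by exact_mod_cast hr)]
  rw [hS.mem_iff_aperyW_le hmS hm, hnr, hx r hr]
  zify
  rw [hn, add_le_add_iff_right, mul_le_mul_iff_of_pos_right (by positivity)]

theorem two_mul_sub_mem_iff_kunz (hS : IsNumericalSemigroup S)
    {m : ℕ} (hmS : m ∈ S) (hm : 0 < m) {x : ℕ → ℕ} (hx : ∀ i < m, aperyW S m i = x i * m + i) :
    (∀ s ∈ S, ∀ t ∈ S, t ≤ s → 2 * s - t ∈ S) ↔
      ∀ i < m, ∀ j < m, ∀ u v : ℤ, (x i : ℤ) ≤ u → (x j : ℤ) ≤ v →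
        u + ⌈((i : ℚ) - (j : ℚ)) / (m : ℚ)⌉ ≤ v →
        (x ((2 * (j : ℤ) - (i : ℤ)) % (m : ℤ)).toNat : ℤ) ≤ 2 * v - u +
          (⌊(2 * (j : ℚ)) / (m : ℚ)⌋
            - ⌊(((((2 * (j : ℤ) - (i : ℤ)) % (m : ℤ)).toNat : ℚ)) + (i : ℚ)) / (m : ℚ)⌋) := by
  have hmZ : (0 : ℤ) < m := by exact_mod_cast hm
  have residue : ∀ i j : ℕ, (((2 * (j : ℤ) - i) % m).toNat : ℤ) = (2 * (j : ℤ) - i) % m ∧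
      ((2 * (j : ℤ) - i) % m).toNat < m := fun i j => by
    have := Int.emod_nonneg (2 * (j : ℤ) - i) hmZ.ne'
    have := Int.emod_lt_of_pos (2 * (j : ℤ) - i) hmZ
    omega
  have two_mul_sub_cast : ∀ {s t : ℕ} {i j : ℕ} {u v : ℤ}, t ≤ s → (t : ℤ) = u * m + i →
      (s : ℤ) = v * m + j → ((2 * s - t : ℕ) : ℤ) = (2 * v - u + (⌊(2 * (j : ℚ)) / (m : ℚ)⌋
        - ⌊(((((2 * (j : ℤ) - (i : ℤ)) % (m : ℤ)).toNat : ℚ)) + (i : ℚ)) / (m : ℚ)⌋)) * m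
        + (((2 * (j : ℤ) - i) % m).toNat : ℤ) := fun hts ht hs => by
    rw [Nat.cast_sub (by omega), Nat.cast_mul, ht, hs]
    linear_combination two_mul_sub_eq_floor_sub_floor m _ _ (residue _ _).1
  constructor
  · intro H i hi j hj u v hu hv huv
    lift u to ℕ using (Int.natCast_nonneg _).trans hu
    lift v to ℕ using (Int.natCast_nonneg _).trans hv
    have ht : (↑(u * m + i) : ℤ) = u * m + i := by push_cast; ring
    have hs : (↑(v * m + j) : ℤ) = v * m + j := by push_cast; ring
    have hts : u * m + i ≤ v * m + j := by
      exact_mod_cast (mul_add_le_mul_add_iff_add_ceil_le hm i j u v).2 huv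
    have h2st := H _ ((hS.mem_iff_kunz hmS hm hx hj hs).2 hv) _
      ((hS.mem_iff_kunz hmS hm hx hi ht).2 hu) hts
    exact (hS.mem_iff_kunz hmS hm hx (residue i j).2 (two_mul_sub_cast hts ht hs)).1 h2st
  · intro H s hs t ht hts
    have hdecomp : ∀ n : ℕ, (n : ℤ) = ((n / m : ℕ) : ℤ) * m + (n % m : ℕ) := fun n => by
      exact_mod_cast (Nat.div_add_mod' n m).symm
    have hi := Nat.mod_lt t hm
    have hj := Nat.mod_lt s hm
    have huv := (mul_add_le_mul_add_iff_add_ceil_le hm (t % m) (s % m)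
      ((t / m : ℕ) : ℤ) ((s / m : ℕ) : ℤ)).1
      (by rw [← hdecomp, ← hdecomp]; exact_mod_cast hts)
    have := H _ hi _ hj _ _ ((hS.mem_iff_kunz hmS hm hx hi (hdecomp t)).1 ht)
      ((hS.mem_iff_kunz hmS hm hx hj (hdecomp s)).1 hs) huv
    exact (hS.mem_iff_kunz hmS hm hx (residue _ _).2
      (two_mul_sub_cast hts (hdecomp t) (hdecomp s))).2 this

end IsNumericalSemigroup

theorem arf_iff_kunz_condition_general (S : Set ℕ) (hS : IsNumericalSemigroup S)
    (m : ℕ) (hm : m = multiplicityOf S) (x : ℕ → ℕ)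
    (hx : ∀ i < m, aperyW S m i = x i * m + i) :
    HasArfProperty S ↔
      ∀ i < m, ∀ j < m,
        (((x j : ℚ) ≤ (x i : ℚ) + (⌈((i : ℚ) - (j : ℚ)) / (m : ℚ)⌉ : ℚ)) →
          0 ≤ (x i : ℚ) - (x ((2 * (j : ℤ) - (i : ℤ)) % (m : ℤ)).toNat : ℚ)
              + 2 * (⌈((i : ℚ) - (j : ℚ)) / (m : ℚ)⌉ : ℚ)
              + (⌊(2 * (j : ℚ)) / (m : ℚ)⌋ : ℚ)
              - (⌊(((((2 * (j : ℤ) - (i : ℤ)) % (m : ℤ)).toNat : ℚ)) + (i : ℚ)) / (m : ℚ)⌋ : ℚ)) ∧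
        (((x i : ℚ) + (⌈((i : ℚ) - (j : ℚ)) / (m : ℚ)⌉ : ℚ) < (x j : ℚ)) →
          0 ≤ (x j : ℚ) - (x ((2 * (j : ℤ) - (i : ℤ)) % (m : ℤ)).toNat : ℚ)
              + (⌈((i : ℚ) - (j : ℚ)) / (m : ℚ)⌉ : ℚ)
              + (⌊(2 * (j : ℚ)) / (m : ℚ)⌋ : ℚ)
              - (⌊(((((2 * (j : ℤ) - (i : ℤ)) % (m : ℤ)).toNat : ℚ)) + (i : ℚ)) / (m : ℚ)⌋ : ℚ)) := by
  subst hm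
  rw [hasArfProperty_iff_two_mul_sub_mem,
    hS.two_mul_sub_mem_iff_kunz hS.multiplicityOf_mem_s7 hS.multiplicityOf_pos hx]
  refine forall₂_congr fun i _ => forall₂_congr fun j _ => ?_
  rw [forall_le_two_mul_sub_add_iff, nonneg_by_cases_iff_le_max_add]
  exact_mod_cast Iff.rfl

theorem arf_iff_kunz_condition (S : Set ℕ) (hS : IsNumericalSemigroup S)
    (m : ℕ) (hm : m = multiplicityOf S) (x : ℕ → ℕ) (hx0 : x 0 = 0)
    (hx : ∀ i < m, aperyW S m i = x i * m + i) :
    HasArfProperty S ↔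
      ∀ i < m, ∀ j < m,
        (((x j : ℚ) ≤ (x i : ℚ) + (⌈((i : ℚ) - (j : ℚ)) / (m : ℚ)⌉ : ℚ)) →
          0 ≤ (x i : ℚ) - (x ((2 * (j : ℤ) - (i : ℤ)) % (m : ℤ)).toNat : ℚ)
              + 2 * (⌈((i : ℚ) - (j : ℚ)) / (m : ℚ)⌉ : ℚ)
              + (⌊(2 * (j : ℚ)) / (m : ℚ)⌋ : ℚ)
              - (⌊(((((2 * (j : ℤ) - (i : ℤ)) % (m : ℤ)).toNat : ℚ)) + (i : ℚ)) / (m : ℚ)⌋ : ℚ)) ∧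
        (((x i : ℚ) + (⌈((i : ℚ) - (j : ℚ)) / (m : ℚ)⌉ : ℚ) < (x j : ℚ)) →
          0 ≤ (x j : ℚ) - (x ((2 * (j : ℤ) - (i : ℤ)) % (m : ℤ)).toNat : ℚ)
              + (⌈((i : ℚ) - (j : ℚ)) / (m : ℚ)⌉ : ℚ)
              + (⌊(2 * (j : ℚ)) / (m : ℚ)⌋ : ℚ)
              - (⌊(((((2 * (j : ℤ) - (i : ℤ)) % (m : ℤ)).toNat : ℚ)) + (i : ℚ)) / (m : ℚ)⌋ : ℚ)) :=
  arf_iff_kunz_condition_general S hS m hm x hx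
end

section
/- Let S be a numerical semigroup with the Arf property, multiplicity m ≥ 2 and conductor c, and write c̄ = c mod m. Then: (i) w(1) = c + 1 if c ≡ 0 (mod m), and w(1) = c − c̄ + m + 1 otherwise; (ii) w(m−1) = c − c̄ + m − 1. -/
/-! In an Arf semigroup, two consecutive elements `u, u + 1` force every `n ≥ u + 1` into `S`,
since `k + (u + 1) - u = k + 1`. An element `s ≡ 1 (mod m)` sits just above the multiple `s - 1`
of `m ∈ S`, and an element `s ≡ -1` just below the multiple `s + 1`; hence both are at least the
conductor `c` (for `s ≡ -1` because `c - 1` is a gap). So `w(±1)` is the unique integer of its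
class in `[c, c + m)`; for `w(1)` note that `c ≢ 1`, again because `c - 1` is a gap. -/

section NumericalSemigroup

variable {S : Set ℕ} {m : ℕ}

theorem mem_of_conductorOf_le (hfin : Sᶜ.Finite) {n : ℕ} (hn : conductorOf S ≤ n) : n ∈ S := by
  obtain ⟨N, hN⟩ := hfin.bddAbove
  have hne : {c | ∀ n, c ≤ n → n ∈ S}.Nonempty :=
    ⟨N + 1, fun n hn => by_contra fun hns => absurd (hN hns) (by omega)⟩
  exact Nat.sInf_mem hne n hn

theorem conductorOf_le {c : ℕ} (h : ∀ n, c ≤ n → n ∈ S) : conductorOf S ≤ c :=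
  Nat.sInf_le h

theorem conductorOf_sub_one_notMem (hfin : Sᶜ.Finite) (hc : 0 < conductorOf S) :
    conductorOf S - 1 ∉ S := fun hmem => by
  have : conductorOf S ≤ conductorOf S - 1 := conductorOf_le fun n hn => by
    rcases hn.eq_or_lt with rfl | hlt
    · exact hmem
    · exact mem_of_conductorOf_le hfin (by omega)
  omega

theorem multiplicityOf_mem (hfin : Sᶜ.Finite) : multiplicityOf S ∈ S :=
  (Nat.sInf_mem (s := {n | n ∈ S ∧ 0 < n})
    ⟨conductorOf S + 1, mem_of_conductorOf_le hfin (by omega), by omega⟩).1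

theorem mul_mem_of_mem (h0 : 0 ∈ S) (hadd : ∀ a ∈ S, ∀ b ∈ S, a + b ∈ S) (hm : m ∈ S)
    (k : ℕ) : m * k ∈ S := by
  induction k with
  | zero => simpa using h0
  | succ k ih => simpa [Nat.mul_succ] using hadd _ ih m hm

theorem HasArfProperty.mem_of_succ_le (hA : HasArfProperty S) {u : ℕ} (hu : u ∈ S)
    (hu1 : u + 1 ∈ S) {n : ℕ} (hn : u + 1 ≤ n) : n ∈ S := by
  induction n, hn using Nat.le_induction with
  | base => exact hu1
  | succ k hk ih =>
    simpa [show k + (u + 1) - u = k + 1 by omega] using hA k ih (u + 1) hu1 u hu (by omega) hk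

theorem HasArfProperty.conductorOf_le_succ (hA : HasArfProperty S) {u : ℕ} (hu : u ∈ S)
    (hu1 : u + 1 ∈ S) : conductorOf S ≤ u + 1 :=
  conductorOf_le fun _ => hA.mem_of_succ_le hu hu1

theorem HasArfProperty.conductorOf_le_of_mod_eq_one (hA : HasArfProperty S) (h0 : 0 ∈ S)
    (hadd : ∀ a ∈ S, ∀ b ∈ S, a + b ∈ S) (hm : m ∈ S) {s : ℕ} (hs : s ∈ S) (hsm : s % m = 1) :
    conductorOf S ≤ s := by
  have hsplit : m * (s / m) + 1 = s := by rw [← hsm, Nat.div_add_mod]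
  rw [← hsplit] at hs ⊢
  exact hA.conductorOf_le_succ (mul_mem_of_mem h0 hadd hm _) hs

theorem HasArfProperty.conductorOf_le_of_mod_eq_pred (hA : HasArfProperty S)
    (hS : IsNumericalSemigroup S) (hm : m ∈ S) (hm0 : 0 < m) {s : ℕ} (hs : s ∈ S)
    (hsm : s % m = m - 1) : conductorOf S ≤ s := by
  obtain ⟨h0, hadd, hfin⟩ := hS
  have hsplit : m * (s / m + 1) = s + 1 := by
    have := Nat.div_add_mod s m
    rw [Nat.mul_succ]; omega
  have hle : conductorOf S ≤ s + 1 :=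
    hA.conductorOf_le_succ hs (hsplit ▸ mul_mem_of_mem h0 hadd hm _)
  rcases hle.eq_or_lt with heq | hlt
  · exact absurd (by simpa [heq] using hs) (conductorOf_sub_one_notMem hfin (by omega))
  · omega

theorem conductorOf_mod_ne_one (hS : IsNumericalSemigroup S) (hm : m ∈ S) :
    conductorOf S % m ≠ 1 := fun hcm => by
  obtain ⟨h0, hadd, hfin⟩ := hS
  have hc0 : 0 < conductorOf S := Nat.pos_of_ne_zero fun h => by simp [h] at hcm
  have hsplit : m * (conductorOf S / m) = conductorOf S - 1 := by
    have := Nat.div_add_mod (conductorOf S) m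
    omega
  exact conductorOf_sub_one_notMem hfin hc0 (hsplit ▸ mul_mem_of_mem h0 hadd hm _)

theorem aperyW_eq_of_conductorOf_le (hfin : Sᶜ.Finite) {r : ℕ}
    (hlow : ∀ s ∈ S, s % m = r → conductorOf S ≤ s) {W : ℕ} (hW : conductorOf S ≤ W)
    (hWc : W < conductorOf S + m) (hWr : W % m = r) : aperyW S m r = W :=
  IsLeast.csInf_eq ⟨⟨mem_of_conductorOf_le hfin hW, hWr⟩, fun s ⟨hs, hsr⟩ =>
    Nat.ModEq.le_of_lt_add (hWr.trans hsr.symm) (by have := hlow s hs hsr; omega)⟩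

end NumericalSemigroup

theorem arf_aperyW_one_and_last (S : Set ℕ) (hS : IsNumericalSemigroup S)
    (hA : HasArfProperty S) (m : ℕ) (hm : m = multiplicityOf S) (hm2 : 2 ≤ m)
    (c : ℕ) (hc : c = conductorOf S) :
    ((c % m = 0 → aperyW S m 1 = c + 1) ∧
     (c % m ≠ 0 → aperyW S m 1 = c - c % m + m + 1)) ∧
    aperyW S m (m - 1) = c - c % m + m - 1 := by
  have hmS : m ∈ S := hm ▸ multiplicityOf_mem hS.2.2
  have hlow1 : ∀ s ∈ S, s % m = 1 → conductorOf S ≤ s :=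
    fun _ => hA.conductorOf_le_of_mod_eq_one hS.1 hS.2.1 hmS
  have hlowpred : ∀ s ∈ S, s % m = m - 1 → conductorOf S ≤ s :=
    fun _ => hA.conductorOf_le_of_mod_eq_pred hS hmS (by omega)
  have hcm1 := conductorOf_mod_ne_one hS hmS
  have hcm := Nat.mod_lt (conductorOf S) (by omega : 0 < m)
  have hdiv := Nat.div_add_mod (conductorOf S) m
  subst hc
  refine ⟨⟨fun hc0 => aperyW_eq_of_conductorOf_le hS.2.2 hlow1 (by omega) (by omega) ?_,
    fun hc0 => aperyW_eq_of_conductorOf_le hS.2.2 hlow1 (by omega) (by omega) ?_⟩,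
    aperyW_eq_of_conductorOf_le hS.2.2 hlowpred (by omega) (by omega) ?_⟩
  · rw [show conductorOf S + 1 = m * (conductorOf S / m) + 1 by omega, Nat.mul_add_mod,
      Nat.mod_eq_of_lt hm2]
  · rw [show conductorOf S - conductorOf S % m + m + 1 = m * (conductorOf S / m + 1) + 1 by
      rw [Nat.mul_succ]; omega, Nat.mul_add_mod, Nat.mod_eq_of_lt hm2]
  · rw [show conductorOf S - conductorOf S % m + m - 1 = m * (conductorOf S / m) + (m - 1) by
      omega, Nat.mul_add_mod, Nat.mod_eq_of_lt (by omega)]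
end
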